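/- A sequence (s_k)_{k≥0} of real numbers satisfies: for every polynomial P(x)=∑ a_k x^k nonnegative on ℝ we have ∑ a_k s_k ≥ 0, if and only if for every m ≥ 0 the Hankel quadratic form ∑_{i,j=0}^m s_{i+j} ξ_i ξ_j is positive semidefinite. -/

import Mathlib

/-!
A real polynomial that is nonnegative on `ℝ` is a sum of squares: a real root of it has even
multiplicity, so it splits off a factor `(X - r)²`, and a non-real root `z` splits off
`(X - re z)² + (im z)²`; the cofactor is again nonnegative and the claim follows by induction on
the degree. On the other hand, for `A = ∑ ξᵢ Xⁱ` the moment functional `L(Xᵏ) = s_k` takes the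
value `∑ s_{i+j} ξᵢ ξⱼ` at `A²`, so the Hankel condition says `L(A²) ≥ 0` for every `A`, which
by the first part is the same as `L ≥ 0` on nonnegative polynomials.
-/

open Finset Polynomial

theorem IsSumSq.map {R S F : Type*} [NonUnitalNonAssocSemiring R] [NonUnitalNonAssocSemiring S]
    [FunLike F R S] [NonUnitalRingHomClass F R S] (f : F) {a : R} (h : IsSumSq a) :
    IsSumSq (f a) := by
  induction h with
  | zero => simp
  | sq_add b _ ih => simpa only [map_add, map_mul] using ih.sq_add (f b)

namespace Polynomial

lemma eval_nonneg_of_mul_left {q Q : ℝ[X]} (hq0 : q ≠ 0) (hq : ∀ x, 0 ≤ q.eval x)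
    (hqQ : ∀ x, 0 ≤ (q * Q).eval x) (x : ℝ) : 0 ≤ Q.eval x := by
  have hdense : Dense (q.rootSet ℝ)ᶜ := (q.rootSet_finite ℝ).countable.dense_compl ℝ
  have hclosed : IsClosed {x | 0 ≤ Q.eval x} := isClosed_le continuous_const Q.continuous
  suffices hS : Dense {x | 0 ≤ Q.eval x} from
    Set.eq_univ_iff_forall.1 (hclosed.closure_eq ▸ hS.closure_eq) x
  refine hdense.mono fun y hy => ?_
  have hy0 : q.eval y ≠ 0 := fun h => hy <| (mem_rootSet_of_ne hq0).2 (by simpa using h)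
  have := hqQ y
  rw [eval_mul] at this
  exact (mul_nonneg_iff_of_pos_left ((hq y).lt_of_ne' hy0)).1 this

lemma sq_X_sub_C_dvd_of_nonneg_of_isRoot {P : ℝ[X]} (hP : ∀ x, 0 ≤ P.eval x) {r : ℝ}
    (hr : P.IsRoot r) : (X - C r) ^ 2 ∣ P := by
  rcases eq_or_ne P 0 with rfl | hP0
  · exact dvd_zero _
  have hmin : IsLocalMin (fun x => P.eval x) r :=
    Filter.Eventually.of_forall fun x => by simpa [hr.eq_zero] using hP x
  have hderiv : P.derivative.IsRoot r := by
    rw [IsRoot.def, ← Polynomial.deriv]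
    exact hmin.deriv_eq_zero
  exact (le_rootMultiplicity_iff hP0).1 ((one_lt_rootMultiplicity_iff_isRoot hP0).2 ⟨hr, hderiv⟩)

lemma exists_isSumSq_factor_of_nonneg {P : ℝ[X]} (hP : ∀ x, 0 ≤ P.eval x)
    (hdeg : 0 < P.degree) : ∃ q Q : ℝ[X], P = q * Q ∧ IsSumSq q ∧ 0 < q.natDegree := by
  obtain ⟨z, hz⟩ := Complex.exists_root (f := P.map (algebraMap ℝ ℂ)) (by rwa [degree_map])
  rw [IsRoot, eval_map_algebraMap] at hz
  by_cases him : z.im = 0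
  · have hr : P.IsRoot z.re := by
      have hzr : z = algebraMap ℝ ℂ z.re := Complex.ext (by simp) (by simp [him])
      rw [hzr, aeval_algebraMap_apply_eq_algebraMap_eval] at hz
      exact (algebraMap ℝ ℂ).injective (hz.trans (map_zero _).symm)
    obtain ⟨Q, hQ⟩ := sq_X_sub_C_dvd_of_nonneg_of_isRoot hP hr
    refine ⟨(X - C z.re) ^ 2, Q, hQ, by simp [sq], by simp [natDegree_pow]⟩
  · obtain ⟨Q, hQ⟩ := P.quadratic_dvd_of_aeval_eq_zero_im_ne_zero hz him
    have hq : (X ^ 2 - C (2 * z.re) * X + C (‖z‖ ^ 2) : ℝ[X])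
        = (X - C z.re) * (X - C z.re) + C z.im * C z.im := by
      rw [Complex.sq_norm, Complex.normSq_apply]
      simp only [map_add, map_mul, map_ofNat]
      ring
    have hdeg : (X ^ 2 - C (2 * z.re) * X + C (‖z‖ ^ 2) : ℝ[X]).natDegree = 2 := by
      compute_degree!
    refine ⟨_, Q, hQ, hq ▸ (IsSumSq.mul_self _).add (IsSumSq.mul_self _), by omega⟩

theorem isSumSq_of_forall_eval_nonneg {P : ℝ[X]} (hP : ∀ x, 0 ≤ P.eval x) : IsSumSq P := by
  induction hn : P.natDegree using Nat.strong_induction_on generalizing P with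
  | _ n ih =>
  rcases Nat.eq_zero_or_pos n with rfl | hpos
  · have hc : 0 ≤ P.coeff 0 := by simpa [coeff_zero_eq_eval_zero] using hP 0
    rw [eq_C_of_natDegree_eq_zero hn, ← Real.mul_self_sqrt hc, C_mul]
    exact IsSumSq.mul_self _
  · obtain ⟨q, Q, rfl, hq, hqdeg⟩ :=
      exists_isSumSq_factor_of_nonneg hP (natDegree_pos_iff_degree_pos.1 (hn ▸ hpos))
    have hq0 : q ≠ 0 := ne_zero_of_natDegree_gt hqdeg
    have hQ0 : Q ≠ 0 := by rintro rfl; simp at hn; omega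
    have hQ := eval_nonneg_of_mul_left hq0 (fun x => (hq.map (evalRingHom x)).nonneg) hP
    rw [natDegree_mul hq0 hQ0] at hn
    exact hq.mul (ih _ (by omega) hQ rfl)

end Polynomial

section Moments

variable (s : ℕ → ℝ)

noncomputable def momentFunctional : ℝ[X] →ₗ[ℝ] ℝ :=
  Polynomial.lsum fun n => LinearMap.toSpanSingleton ℝ ℝ (s n)

lemma momentFunctional_monomial (n : ℕ) (a : ℝ) : momentFunctional s (monomial n a) = a * s n := by
  simp [momentFunctional, sum_monomial_index]

lemma momentFunctional_eq_sum_range (P : ℝ[X]) :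
    momentFunctional s P = ∑ k ∈ range (P.natDegree + 1), P.coeff k * s k := by
  rw [momentFunctional, lsum_apply, P.sum_over_range' (fun n => by simp) _ (Nat.lt_succ_self _)]
  simp

lemma momentFunctional_mul_self_sum_monomial {ι : Type*} [Fintype ι] (d : ι → ℕ) (ξ : ι → ℝ) :
    momentFunctional s ((∑ i, monomial (d i) (ξ i)) * ∑ i, monomial (d i) (ξ i)) =
      ∑ i, ∑ j, s (d i + d j) * ξ i * ξ j := by
  simp only [sum_mul_sum, map_sum, monomial_mul_monomial, momentFunctional_monomial]
  exact sum_congr rfl fun i _ => sum_congr rfl fun j _ => by ring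

variable {s}

lemma momentFunctional_mul_self_nonneg
    (hs : ∀ m : ℕ, ∀ ξ : Fin (m + 1) → ℝ, 0 ≤ ∑ i, ∑ j, s (i.val + j.val) * ξ i * ξ j)
    (A : ℝ[X]) : 0 ≤ momentFunctional s (A * A) := by
  have hA : A = ∑ i : Fin (A.natDegree + 1), monomial i (A.coeff i) := by
    rw [Fin.sum_univ_eq_sum_range (fun i => monomial i (A.coeff i))]
    exact A.as_sum_range' _ (Nat.lt_succ_self _)
  rw [hA, momentFunctional_mul_self_sum_monomial]
  exact hs _ _

lemma momentFunctional_nonneg_of_isSumSq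
    (hs : ∀ m : ℕ, ∀ ξ : Fin (m + 1) → ℝ, 0 ≤ ∑ i, ∑ j, s (i.val + j.val) * ξ i * ξ j)
    {P : ℝ[X]} (hP : IsSumSq P) : 0 ≤ momentFunctional s P := by
  induction hP with
  | zero => simp
  | sq_add A _ ih => simpa only [map_add] using add_nonneg (momentFunctional_mul_self_nonneg hs A) ih

end Moments

/-- A real sequence `(s_k)` is positive (in the sense that `∑ a_k s_k ≥ 0` for
every polynomial `∑ a_k x^k` nonnegative on `ℝ`) if and only if all the Hankel
quadratic forms `∑_{i,j=0}^m s_{i+j} ξ_i ξ_j` are positive semidefinite. -/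
theorem stmt_3 (s : ℕ → ℝ) :
    (∀ P : Polynomial ℝ, (∀ x : ℝ, 0 ≤ P.eval x) →
      0 ≤ ∑ k ∈ Finset.range (P.natDegree + 1), P.coeff k * s k)
    ↔ (∀ m : ℕ, ∀ ξ : Fin (m + 1) → ℝ,
      0 ≤ ∑ i, ∑ j, s (i.val + j.val) * ξ i * ξ j) := by
  simp only [← momentFunctional_eq_sum_range]
  refine ⟨fun hP m ξ => ?_, fun hs P hP => ?_⟩
  · rw [← momentFunctional_mul_self_sum_monomial]
    exact hP _ fun x => by simpa only [eval_mul] using mul_self_nonneg _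
  · exact momentFunctional_nonneg_of_isSumSq hs (isSumSq_of_forall_eval_nonneg hP)
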